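/- For any real ρ with −1 < ρ < 1, any real x with ρ ≤ x ≤ 1, and 0 ≤ ρ: the quantity (1−x²)/(1−ρx) ≤ 1 and (1−ρ²)/(1−ρx) ≤ (1−ρ²)/(1−ρ) = 1+ρ, and consequently (1−x²)^{(n−4)/2}(1−ρ²)^{(n−1)/2}(1−ρx)^{−n+3/2} ≤ (1−ρ)^{−1}·exp(2)·exp(−n(x−ρ)²/(2(1−ρ²)))·exp(ρ/2) for all n ≥ 4. -/

import Mathlib

open Real

/-!
With `C = 1 - ρx`, each power `y ^ a` (`a ≥ 0`) is at most `C ^ a e^{(y/C - 1) a}`, by `1 + w ≤ eʷ`.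
The powers of `C` multiply to `C⁻¹ ≤ (1 - ρ)⁻¹`, and the exponent equals
`(3/2) x(x-ρ)/C - ((n-1)/2) (x-ρ)²/C`, where both fractions are at most `1` and
`(x-ρ)²/C ≥ (x-ρ)²/(1-ρ²)` because `C ≤ 1 - ρ²`.
-/

theorem Real.rpow_le_exp_sub_one_mul {z a : ℝ} (hz : 0 ≤ z) (ha : 0 ≤ a) :
    z ^ a ≤ exp ((z - 1) * a) := by
  rw [exp_mul]
  gcongr
  linarith [add_one_le_exp (z - 1)]

theorem Real.rpow_le_rpow_mul_exp {y C a : ℝ} (hy : 0 ≤ y) (hC : 0 < C) (ha : 0 ≤ a) :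
    y ^ a ≤ C ^ a * exp ((y / C - 1) * a) := by
  calc y ^ a = C ^ a * (y / C) ^ a := by
        rw [← mul_rpow hC.le (div_nonneg hy hC.le), mul_div_cancel₀ _ hC.ne']
    _ ≤ C ^ a * exp ((y / C - 1) * a) := by
        gcongr
        exact rpow_le_exp_sub_one_mul (div_nonneg hy hC.le) ha

section Correlation

variable {ρ x : ℝ}

theorem one_sub_sq_div_le_one (hρ0 : 0 ≤ ρ) (hx1 : ρ ≤ x) (hC : 0 < 1 - ρ * x) :
    (1 - x ^ 2) / (1 - ρ * x) ≤ 1 := by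
  rw [div_le_one hC]
  nlinarith

theorem one_sub_sq_div_le_one_add (hρ0 : 0 ≤ ρ) (hx2 : x ≤ 1) (hC : 0 < 1 - ρ * x) :
    (1 - ρ ^ 2) / (1 - ρ * x) ≤ 1 + ρ := by
  rw [div_le_iff₀ hC]
  nlinarith

theorem one_sub_sq_div_one_sub (hρ1 : ρ < 1) : (1 - ρ ^ 2) / (1 - ρ) = 1 + ρ := by
  rw [div_eq_iff (sub_ne_zero.2 hρ1.ne')]
  ring

theorem corr_exponent_eq (n : ℝ) (hC : 1 - ρ * x ≠ 0) :
    ((1 - x ^ 2) / (1 - ρ * x) - 1) * ((n - 4) / 2) +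
        ((1 - ρ ^ 2) / (1 - ρ * x) - 1) * ((n - 1) / 2) =
      3 / 2 * (x * (x - ρ) / (1 - ρ * x)) - (n - 1) / 2 * ((x - ρ) ^ 2 / (1 - ρ * x)) := by
  rw [div_sub_one hC, div_sub_one hC]
  field_simp
  ring

theorem corr_exponent_le {n : ℝ} (hn : 0 ≤ n) (hρ0 : 0 ≤ ρ) (hρ1 : ρ < 1)
    (hx1 : ρ ≤ x) (hx2 : x ≤ 1) :
    ((1 - x ^ 2) / (1 - ρ * x) - 1) * ((n - 4) / 2) +
        ((1 - ρ ^ 2) / (1 - ρ * x) - 1) * ((n - 1) / 2) ≤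
      2 + -n * (x - ρ) ^ 2 / (2 * (1 - ρ ^ 2)) := by
  have hC : 0 < 1 - ρ * x := by nlinarith
  have hu : x * (x - ρ) / (1 - ρ * x) ≤ 1 := by
    rw [div_le_one hC]
    nlinarith
  have hs : (x - ρ) ^ 2 / (1 - ρ * x) ≤ 1 := by
    rw [div_le_one hC]
    nlinarith
  have hts : (x - ρ) ^ 2 / (1 - ρ ^ 2) ≤ (x - ρ) ^ 2 / (1 - ρ * x) :=
    div_le_div_of_nonneg_left (sq_nonneg _) hC (by nlinarith)
  have hn_mul : n * ((x - ρ) ^ 2 / (1 - ρ ^ 2)) ≤ n * ((x - ρ) ^ 2 / (1 - ρ * x)) :=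
    mul_le_mul_of_nonneg_left hts hn
  have ht : -n * (x - ρ) ^ 2 / (2 * (1 - ρ ^ 2)) = -(n * ((x - ρ) ^ 2 / (1 - ρ ^ 2)) / 2) := by
    rw [mul_comm 2, ← div_div, neg_mul, neg_div, neg_div, mul_div_assoc]
  rw [corr_exponent_eq n hC.ne', ht]
  linarith

end Correlation

theorem corr_integrand_bound (ρ x : ℝ) (n : ℕ) (hρ0 : 0 ≤ ρ) (hρ1 : ρ < 1)
    (hx1 : ρ ≤ x) (hx2 : x ≤ 1) (hn : 4 ≤ n) :
    (1 - x ^ 2) / (1 - ρ * x) ≤ 1 ∧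
    (1 - ρ ^ 2) / (1 - ρ * x) ≤ 1 + ρ ∧
    (1 - ρ ^ 2) / (1 - ρ) = 1 + ρ ∧
    (1 - x ^ 2) ^ (((n : ℝ) - 4) / 2) * (1 - ρ ^ 2) ^ (((n : ℝ) - 1) / 2) *
        (1 - ρ * x) ^ (-(n : ℝ) + 3 / 2) ≤
      (1 - ρ)⁻¹ * Real.exp 2 * Real.exp (-(n : ℝ) * (x - ρ) ^ 2 / (2 * (1 - ρ ^ 2))) *
        Real.exp (ρ / 2) := by
  have hC : 0 < 1 - ρ * x := by nlinarith
  have hn4 : (4 : ℝ) ≤ n := by exact_mod_cast hn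
  refine ⟨one_sub_sq_div_le_one hρ0 hx1 hC, one_sub_sq_div_le_one_add hρ0 hx2 hC,
    one_sub_sq_div_one_sub hρ1, ?_⟩
  set C := 1 - ρ * x
  have hpow : C ^ (((n : ℝ) - 4) / 2) * C ^ (((n : ℝ) - 1) / 2) * C ^ (-(n : ℝ) + 3 / 2) = C⁻¹ := by
    rw [← rpow_add hC, ← rpow_add hC, ← rpow_neg_one]
    ring_nf
  calc (1 - x ^ 2) ^ (((n : ℝ) - 4) / 2) * (1 - ρ ^ 2) ^ (((n : ℝ) - 1) / 2) *
        C ^ (-(n : ℝ) + 3 / 2)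
      ≤ C ^ (((n : ℝ) - 4) / 2) * exp (((1 - x ^ 2) / C - 1) * (((n : ℝ) - 4) / 2)) *
          (C ^ (((n : ℝ) - 1) / 2) * exp (((1 - ρ ^ 2) / C - 1) * (((n : ℝ) - 1) / 2))) *
          C ^ (-(n : ℝ) + 3 / 2) := by
        have hB : 0 ≤ 1 - ρ ^ 2 := by nlinarith
        gcongr
        · exact rpow_le_rpow_mul_exp (by nlinarith) hC (by linarith)
        · exact rpow_le_rpow_mul_exp hB hC (by linarith)
    _ = C⁻¹ * exp (((1 - x ^ 2) / C - 1) * (((n : ℝ) - 4) / 2) +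
          ((1 - ρ ^ 2) / C - 1) * (((n : ℝ) - 1) / 2)) := by
        rw [← hpow, exp_add]
        ring
    _ ≤ (1 - ρ)⁻¹ * exp (2 + -(n : ℝ) * (x - ρ) ^ 2 / (2 * (1 - ρ ^ 2)) + ρ / 2) := by
        gcongr ?_ * exp ?_
        · exact inv_anti₀ (by linarith) (by nlinarith)
        · linarith [corr_exponent_le (by linarith : (0 : ℝ) ≤ n) hρ0 hρ1 hx1 hx2]
    _ = (1 - ρ)⁻¹ * exp 2 * exp (-(n : ℝ) * (x - ρ) ^ 2 / (2 * (1 - ρ ^ 2))) * exp (ρ / 2) := by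
        rw [exp_add, exp_add]
        ring
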